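/- Let d ≥ 2 be even and let m ≥ 0 be a real number. Let e_0, …, e_d be the standard basis of ℝ^{d+1}, with indices taken modulo d+1, let a^{(i)} = e_{i+1} − e_{i−1} for i = 0, …, d, let Δ = conv(e_0, …, e_d), let A = conv(a^{(0)}, …, a^{(d)}), and for each i let A^{(i)} = conv({0} ∪ {a^{(j)} : j ≠ i}). Then every lattice point p ∈ ℤ^{d+1} ∩ (Δ + m·A) lies in e_{i−1} + m·A^{(i)} for some i ∈ {0, …, d} (indices modulo d+1), where Δ + m·A denotes the Minkowski sum. -/

import Mathlib

open Pointwise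

/-- The standard basis vector `e_i` of `ℝ^{d+1}`. -/
def eb (d : ℕ) (i : Fin (d+1)) : Fin (d+1) → ℝ := fun j => if j = i then 1 else 0

/-- The vector `a^{(i)} = e_{i+1} - e_{i-1}` (indices modulo `d+1`). -/
def av (d : ℕ) (i : Fin (d+1)) : Fin (d+1) → ℝ := eb d (i + 1) - eb d (i - 1)

/-!
Since `d + 1` is odd, the walk `i + 1, i + 3, …, i + 2d + 1 = i - 1` visits every coordinate
once, and `a^{(i+2t)}` is the step from its `(t-1)`-st to its `t`-th vertex. Summation by parts
along the walk writes `p = e_{i-1} + ∑_{t=1}^{d} c_t a^{(i+2t)}`, where `-c_t` is the sum of the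
first `t` coordinates of `p` met on the walk. By the cycle lemma (the coordinates are integers
summing to `1`) some starting point `i` makes all these partial sums `≤ 0`, i.e. `c_t ≥ 0`.
Finally `∑ c_t ≤ m`: the functional giving weight `d - τ` to the `τ`-th vertex of the walk is
`≥ 0` on `Δ`, `≥ -1` on `A`, and equals `-1` on each `a^{(i+2t)}` with `1 ≤ t ≤ d`.
-/

open Finset Fin.NatCast Fin.CommRing

theorem Finset.sum_range_succ_smul_by_parts {R M : Type*} [Ring R] [AddCommGroup M] [Module R M]
    (x : ℕ → R) (v : ℕ → M) (s : ℕ) :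
    ∑ τ ∈ range (s + 1), x τ • v τ =
      (∑ τ ∈ range (s + 1), x τ) • v s -
        ∑ t ∈ range s, (∑ τ ∈ range (t + 1), x τ) • (v (t + 1) - v t) := by
  induction s with
  | zero => simp
  | succ s ih =>
    rw [sum_range_succ (fun τ => x τ • v τ), ih, sum_range_succ x (s + 1),
      sum_range_succ (fun t => (∑ τ ∈ range (t + 1), x τ) • (v (t + 1) - v t)), add_smul, smul_sub]
    abel

theorem exists_rotation_partial_sums_nonpos {n : ℕ} (hn : 0 < n) (f : ℕ → ℤ)
    (hf : ∀ k, f (k + n) = f k) (hsum : ∑ k ∈ range n, f k ≤ 1) :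
    ∃ s₀ < n, ∀ s < n, ∑ r ∈ range s, f (s₀ + r) ≤ 0 := by
  set T : ℕ → ℤ := fun s => ∑ k ∈ range s, f k with hT
  have hex : ∃ s₀, s₀ < n ∧ ∀ k < n, T k ≤ T s₀ := by
    obtain ⟨s₀, hs₀, hmax⟩ := exists_max_image (range n) T (nonempty_range_iff.mpr hn.ne')
    exact ⟨s₀, mem_range.mp hs₀, fun k hk => hmax k (mem_range.mpr hk)⟩
  set s₀ := Nat.find hex
  obtain ⟨hs₀, hmax⟩ : s₀ < n ∧ ∀ k < n, T k ≤ T s₀ := Nat.find_spec hex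
  have hfirst : ∀ k < s₀, T k < T s₀ := by
    intro k hk
    have := Nat.find_min hex hk
    push Not at this
    obtain ⟨j, hj, hkj⟩ := this (hk.trans hs₀)
    exact hkj.trans_le (hmax j hj)
  have hperiod : ∀ k, T (n + k) ≤ T k + 1 := by
    intro k
    simp only [hT, sum_range_add]
    simp only [add_comm n, hf]
    linarith
  refine ⟨s₀, hs₀, fun s hs => ?_⟩
  have hrot : ∑ r ∈ range s, f (s₀ + r) = T (s₀ + s) - T s₀ := by
    simp only [hT, sum_range_add]
    ring
  rw [hrot]
  rcases lt_or_ge (s₀ + s) n with hlt | hge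
  · linarith [hmax _ hlt]
  · obtain ⟨k, hk⟩ := Nat.exists_eq_add_of_le hge
    rw [hk]
    linarith [hperiod k, hfirst k (by omega)]

theorem sum_smul_mem_smul_convexHull_insert_zero {E ι : Type*} [AddCommGroup E] [Module ℝ E]
    {S : Set E} {s : Finset ι} {c : ι → ℝ} {x : ι → E} {m : ℝ} (hc : ∀ t ∈ s, 0 ≤ c t)
    (hcm : ∑ t ∈ s, c t ≤ m) (hx : ∀ t ∈ s, x t ∈ S) :
    ∑ t ∈ s, c t • x t ∈ m • convexHull ℝ (insert 0 S) := by
  have hzero : (0 : E) ∈ convexHull ℝ (insert 0 S) := subset_convexHull ℝ _ (Set.mem_insert 0 S)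
  rcases (sum_nonneg hc).eq_or_lt with hσ | hσ
  · rw [sum_eq_zero fun t ht => by rw [(sum_eq_zero_iff_of_nonneg hc).mp hσ.symm t ht, zero_smul]]
    simpa using Set.smul_mem_smul_set (a := m) hzero
  have hm : 0 < m := hσ.trans_le hcm
  have hcenter : s.centerMass c x ∈ convexHull ℝ (insert 0 S) :=
    convexHull_mono (Set.subset_insert 0 S) (s.centerMass_mem_convexHull hc hσ hx)
  have hscaled : ((∑ t ∈ s, c t) / m) • s.centerMass c x ∈ convexHull ℝ (insert 0 S) :=
    ((convex_convexHull ℝ _).starConvex hzero).smul_mem hcenter (by positivity)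
      ((div_le_one hm).mpr hcm)
  convert Set.smul_mem_smul_set (a := m) hscaled using 1
  rw [smul_smul, mul_div_cancel₀ _ hm.ne', centerMass, smul_smul, mul_inv_cancel₀ hσ.ne', one_smul]

theorem le_apply_of_mem_convexHull_add_smul_convexHull {E : Type*} [AddCommGroup E] [Module ℝ E]
    (φ : E →ₗ[ℝ] ℝ) {S T : Set E} {α β m : ℝ} (hm : 0 ≤ m) (hS : ∀ x ∈ S, α ≤ φ x)
    (hT : ∀ y ∈ T, β ≤ φ y) {p : E} (hp : p ∈ convexHull ℝ S + m • convexHull ℝ T) :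
    α + m * β ≤ φ p := by
  obtain ⟨q, hq, _, ⟨r, hr, rfl⟩, rfl⟩ := hp
  have hq' : α ≤ φ q := convexHull_min hS (convex_halfSpace_ge φ.isLinear α) hq
  have hr' : β ≤ φ r := convexHull_min hT (convex_halfSpace_ge φ.isLinear β) hr
  rw [map_add, map_smul, smul_eq_mul]
  nlinarith

section TwoStepWalk

variable {d : ℕ}

def twoStepWalk (i : Fin (d + 1)) (τ : ℕ) : Fin (d + 1) := i + 1 + 2 * τ

/-- `d / 2 + 1` inverts `2` modulo `d + 1`. -/
def twoStepIndex (i j : Fin (d + 1)) : ℕ := (((d / 2 + 1 : ℕ) : Fin (d + 1)) * (j - i - 1)).val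

theorem two_mul_half_add_one (hd : Even d) :
    (2 : Fin (d + 1)) * ((d / 2 + 1 : ℕ) : Fin (d + 1)) = 1 := by
  have h : 2 * (d / 2 + 1) = (d + 1) + 1 := by have := Nat.two_mul_div_two_of_even hd; omega
  rw [← Nat.cast_two, ← Nat.cast_mul, h, Nat.cast_add, Fin.natCast_self, zero_add, Nat.cast_one]

theorem twoStepWalk_twoStepIndex (hd : Even d) (i j : Fin (d + 1)) :
    twoStepWalk i (twoStepIndex i j) = j := by
  rw [twoStepWalk, twoStepIndex, Fin.cast_val_eq_self]
  linear_combination (j - i - 1) * two_mul_half_add_one hd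

theorem twoStepIndex_twoStepWalk (hd : Even d) (i : Fin (d + 1)) {τ : ℕ} (hτ : τ < d + 1) :
    twoStepIndex i (twoStepWalk i τ) = τ := by
  have h : ((d / 2 + 1 : ℕ) : Fin (d + 1)) * (twoStepWalk i τ - i - 1) = τ := by
    rw [twoStepWalk]
    linear_combination (τ : Fin (d + 1)) * two_mul_half_add_one hd
  rw [twoStepIndex, h, Fin.val_natCast, Nat.mod_eq_of_lt hτ]

theorem twoStepIndex_lt (i j : Fin (d + 1)) : twoStepIndex i j < d + 1 := Fin.is_lt _

theorem twoStepWalk_succ (i : Fin (d + 1)) (τ : ℕ) :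
    twoStepWalk i (τ + 1) = twoStepWalk i τ + 2 := by
  rw [twoStepWalk, twoStepWalk]
  push_cast
  ring

theorem twoStepWalk_add (i : Fin (d + 1)) (s τ : ℕ) :
    twoStepWalk i (s + τ) = twoStepWalk (i + 2 * (s : Fin (d + 1))) τ := by
  rw [twoStepWalk, twoStepWalk]
  push_cast
  ring

theorem twoStepWalk_add_period (i : Fin (d + 1)) (τ : ℕ) :
    twoStepWalk i (τ + (d + 1)) = twoStepWalk i τ := by
  rw [twoStepWalk, twoStepWalk, Nat.cast_add, Fin.natCast_self, add_zero]

theorem twoStepWalk_last (i : Fin (d + 1)) : twoStepWalk i d = i - 1 := by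
  have h : ((d : ℕ) : Fin (d + 1)) + 1 = 0 := by exact_mod_cast Fin.natCast_self (d + 1)
  rw [twoStepWalk]
  linear_combination 2 * h

theorem twoStepWalk_add_one_ne (hd : Even d) (i : Fin (d + 1)) {t : ℕ} (ht : t < d) :
    twoStepWalk i t + 1 ≠ i := by
  intro h
  have : twoStepWalk i t = twoStepWalk i d := by rw [twoStepWalk_last]; exact eq_sub_of_add_eq h
  have := congrArg (twoStepIndex i) this
  rw [twoStepIndex_twoStepWalk hd i (by omega), twoStepIndex_twoStepWalk hd i (by omega)] at this
  omega

theorem sum_range_twoStepWalk {M : Type*} [AddCommMonoid M] (hd : Even d) (i : Fin (d + 1))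
    (f : Fin (d + 1) → M) : ∑ τ ∈ range (d + 1), f (twoStepWalk i τ) = ∑ j, f j :=
  sum_nbij' (twoStepWalk i) (twoStepIndex i) (by simp)
    (fun j _ => mem_range.mpr (twoStepIndex_lt i j))
    (fun τ hτ => twoStepIndex_twoStepWalk hd i (mem_range.mp hτ))
    (fun j _ => twoStepWalk_twoStepIndex hd i j) (fun _ _ => rfl)

end TwoStepWalk

section Simplex

variable {d : ℕ}

theorem sum_eb_apply (i : Fin (d + 1)) : ∑ j, eb d i j = 1 := by simp [eb]

theorem sum_av_apply (i : Fin (d + 1)) : ∑ j, av d i j = 0 := by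
  simp [av, sum_sub_distrib, sum_eb_apply]

theorem sum_apply_eq_one_of_mem {m : ℝ} (hm : 0 ≤ m) {p : Fin (d + 1) → ℝ}
    (hp : p ∈ convexHull ℝ (Set.range (eb d)) + m • convexHull ℝ (Set.range (av d))) :
    ∑ j, p j = 1 := by
  let φ : (Fin (d + 1) → ℝ) →ₗ[ℝ] ℝ := ∑ j, LinearMap.proj j
  have hφ : ∀ x, φ x = ∑ j, x j := fun x => by simp [φ]
  have hge := le_apply_of_mem_convexHull_add_smul_convexHull φ hm (α := 1) (β := 0)
    (by rintro _ ⟨i, rfl⟩; rw [hφ, sum_eb_apply]) (by rintro _ ⟨i, rfl⟩; rw [hφ, sum_av_apply]) hp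
  have hle := le_apply_of_mem_convexHull_add_smul_convexHull (-φ) hm (α := -1) (β := 0)
    (by rintro _ ⟨i, rfl⟩; simp [hφ, sum_eb_apply])
    (by rintro _ ⟨i, rfl⟩; simp [hφ, sum_av_apply]) hp
  simp only [LinearMap.neg_apply, hφ] at hge hle
  linarith

theorem av_twoStepWalk_add_one (i : Fin (d + 1)) (t : ℕ) :
    av d (twoStepWalk i t + 1) = eb d (twoStepWalk i (t + 1)) - eb d (twoStepWalk i t) := by
  rw [av, twoStepWalk_succ, add_sub_cancel_right]
  congr 2
  ring

theorem eq_eb_add_sum_smul_av (hd : Even d) (i : Fin (d + 1)) {p : Fin (d + 1) → ℝ}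
    (hp : ∑ j, p j = 1) :
    p = eb d (i - 1) +
      ∑ t ∈ range d, (-∑ τ ∈ range (t + 1), p (twoStepWalk i τ)) • av d (twoStepWalk i t + 1) := by
  calc p = ∑ j, p j • eb d j := by ext k; simp [eb]
    _ = ∑ τ ∈ range (d + 1), p (twoStepWalk i τ) • eb d (twoStepWalk i τ) :=
      (sum_range_twoStepWalk hd i _).symm
    _ = _ := by
      rw [sum_range_succ_smul_by_parts, sum_range_twoStepWalk hd i p, hp, one_smul,
        twoStepWalk_last, sub_eq_add_neg, ← sum_neg_distrib]
      simp only [av_twoStepWalk_add_one, neg_smul]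

def depth (i : Fin (d + 1)) : (Fin (d + 1) → ℝ) →ₗ[ℝ] ℝ :=
  ∑ j, ((d : ℝ) - twoStepIndex i j) • LinearMap.proj j

theorem depth_eb (i j : Fin (d + 1)) : depth i (eb d j) = d - twoStepIndex i j := by
  simp [depth, eb]

theorem depth_eb_nonneg (i j : Fin (d + 1)) : 0 ≤ depth i (eb d j) := by
  rw [depth_eb, sub_nonneg]
  exact_mod_cast Nat.lt_succ_iff.mp (twoStepIndex_lt i j)

theorem depth_eb_twoStepWalk (hd : Even d) (i : Fin (d + 1)) {τ : ℕ} (hτ : τ < d + 1) :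
    depth i (eb d (twoStepWalk i τ)) = d - τ := by
  rw [depth_eb, twoStepIndex_twoStepWalk hd i hτ]

theorem depth_av_twoStepWalk_add_one (hd : Even d) (i : Fin (d + 1)) {t : ℕ} (ht : t < d) :
    depth i (av d (twoStepWalk i t + 1)) = -1 := by
  rw [av_twoStepWalk_add_one, map_sub, depth_eb_twoStepWalk hd i (by omega),
    depth_eb_twoStepWalk hd i (by omega)]
  push_cast
  ring

theorem neg_one_le_depth_av (hd : Even d) (i j : Fin (d + 1)) : -1 ≤ depth i (av d j) := by
  obtain ⟨σ, hσ, rfl⟩ : ∃ σ < d + 1, j = twoStepWalk i σ + 1 :=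
    ⟨twoStepIndex i (j - 1), twoStepIndex_lt _ _,
      by rw [twoStepWalk_twoStepIndex hd, sub_add_cancel]⟩
  rcases (Nat.lt_succ_iff.mp hσ).lt_or_eq with hσd | rfl
  · rw [depth_av_twoStepWalk_add_one hd i hσd]
  · rw [av_twoStepWalk_add_one, map_sub, depth_eb_twoStepWalk hd i hσ, sub_self, sub_zero]
    linarith [depth_eb_nonneg i (twoStepWalk i (σ + 1))]

theorem sum_neg_partial_sums_le (hd : Even d) {m : ℝ} (hm : 0 ≤ m) (i : Fin (d + 1))
    {p : Fin (d + 1) → ℝ}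
    (hp : p ∈ convexHull ℝ (Set.range (eb d)) + m • convexHull ℝ (Set.range (av d))) :
    ∑ t ∈ range d, -∑ τ ∈ range (t + 1), p (twoStepWalk i τ) ≤ m := by
  have hlower := le_apply_of_mem_convexHull_add_smul_convexHull (depth i) hm (α := 0) (β := -1)
    (by rintro _ ⟨j, rfl⟩; exact depth_eb_nonneg i j)
    (by rintro _ ⟨j, rfl⟩; exact neg_one_le_depth_av hd i j) hp
  have hdepth : depth i p = -∑ t ∈ range d, -∑ τ ∈ range (t + 1), p (twoStepWalk i τ) := by
    conv_lhs => rw [eq_eb_add_sum_smul_av hd i (sum_apply_eq_one_of_mem hm hp)]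
    rw [map_add, map_sum, ← twoStepWalk_last, depth_eb_twoStepWalk hd i (Nat.lt_succ_self d),
      sub_self, zero_add, ← sum_neg_distrib]
    refine sum_congr rfl fun t ht => ?_
    rw [map_smul, depth_av_twoStepWalk_add_one hd i (mem_range.mp ht), smul_eq_mul, mul_neg_one]
  linarith

end Simplex

theorem stmt14_general (d : ℕ) (hde : Even d) (m : ℝ) (hm : 0 ≤ m) :
    ∀ p : Fin (d+1) → ℝ, (∀ j, ∃ z : ℤ, p j = (z : ℝ)) →
      p ∈ convexHull ℝ (Set.range (eb d)) + m • convexHull ℝ (Set.range (av d)) →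
      ∃ i : Fin (d+1),
        p ∈ ({eb d (i - 1)} : Set (Fin (d+1) → ℝ))
              + m • convexHull ℝ ({0} ∪ av d '' {j | j ≠ i}) := by
  intro p hint hp
  choose P hP using hint
  have hsum := sum_apply_eq_one_of_mem hm hp
  have hPsum : ∑ j, (P j : ℝ) = 1 := by simpa only [hP] using hsum
  obtain ⟨s₀, -, hs₀⟩ := exists_rotation_partial_sums_nonpos (Nat.succ_pos d)
    (fun τ => P (twoStepWalk 0 τ)) (fun τ => by rw [twoStepWalk_add_period])
    (by rw [sum_range_twoStepWalk hde]; exact_mod_cast hPsum.le)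
  set i : Fin (d + 1) := 0 + 2 * (s₀ : Fin (d + 1))
  refine ⟨i, ?_⟩
  rw [eq_eb_add_sum_smul_av hde i hsum, Set.singleton_union]
  refine Set.add_mem_add rfl (sum_smul_mem_smul_convexHull_insert_zero (fun t ht => ?_)
    (sum_neg_partial_sums_le hde hm i hp)
    fun t ht => ⟨_, twoStepWalk_add_one_ne hde i (mem_range.mp ht), rfl⟩)
  have hpartial := hs₀ (t + 1) (by simpa using mem_range.mp ht)
  simp only [i, ← twoStepWalk_add, hP]
  exact_mod_cast neg_nonneg.mpr hpartial

theorem stmt14 (d : ℕ) (hd : 2 ≤ d) (hde : Even d) (m : ℝ) (hm : 0 ≤ m) :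
    ∀ p : Fin (d+1) → ℝ, (∀ j, ∃ z : ℤ, p j = (z : ℝ)) →
      p ∈ convexHull ℝ (Set.range (eb d)) + m • convexHull ℝ (Set.range (av d)) →
      ∃ i : Fin (d+1),
        p ∈ ({eb d (i - 1)} : Set (Fin (d+1) → ℝ))
              + m • convexHull ℝ ({0} ∪ av d '' {j | j ≠ i}) :=
  stmt14_general d hde m hm
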